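/- Let V ∈ R^{K×R} have full column rank R and let p be the row index set selected so that |det V(p,:)| is maximal over all R-subsets of rows (the MaxVol choice). Then V(p,:) is invertible and every entry of the interpolation matrix T = V · V(p,:)⁻¹ has absolute value at most 1. -/

import Mathlib

/-!
Replacing row `j` of the selected submatrix `A = V(p,:)` by row `i` of `V` gives another row
selection, so by maximality its determinant is at most `|det A|` in absolute value (it vanishes
when the selection repeats a row). By Cramer's rule this determinant is `det A * T i j`, hence
`|T i j| ≤ 1`. Full column rank guarantees some invertible `R × R` row selection, so `det A ≠ 0`.
-/

open Matrix

namespace Matrix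

variable {m n o : Type*}

theorem submatrix_update_eq_updateRow {α : Type*} [DecidableEq n] (M : Matrix m o α)
    (p : n → m) (c : n → o) (j : n) (i : m) :
    M.submatrix (Function.update p j i) c = (M.submatrix p c).updateRow j (M i ∘ c) := by
  ext j' k
  by_cases h : j' = j
  · subst h; simp
  · simp [Function.update_of_ne h, updateRow_ne h]

theorem det_submatrix_eq_zero_of_not_injective {R : Type*} [CommRing R] [Fintype n]
    [DecidableEq n] (M : Matrix m o R) {q : n → m} (hq : ¬ q.Injective) (c : n → o) :
    (M.submatrix q c).det = 0 := by
  obtain ⟨j, j', hqj, hj⟩ := Function.not_injective_iff.mp hq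
  exact det_zero_of_row_eq hj (by ext k; simp [hqj])

theorem det_mul_vecMul_inv_apply {K : Type*} [Field K] [Fintype n] [DecidableEq n]
    (A : Matrix n n K) (hA : IsUnit A.det) (b : n → K) (j : n) :
    A.det * (b ᵥ* A⁻¹) j = (A.updateRow j b).det := by
  rw [← cramer_transpose_apply, ← det_smul_inv_vecMul_eq_cramer_transpose A b hA]
  rfl

theorem exists_injective_isUnit_det_submatrix {K : Type*} [Field K] [Fintype m] [Fintype n]
    [DecidableEq n] (V : Matrix m n K) (hrank : V.rank = Fintype.card n) :
    ∃ q : n → m, q.Injective ∧ IsUnit (V.submatrix q id).det := by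
  obtain ⟨κ, a, ha, hspan, hli⟩ := exists_linearIndependent' K V.row
  have : Fintype κ := Fintype.ofInjective a ha
  have hcard : Fintype.card κ = Fintype.card n := by
    rw [linearIndependent_iff_card_eq_finrank_span.mp hli, Set.finrank, hspan, ← hrank,
      rank_eq_finrank_span_row]
  let e : n ≃ κ := (Fintype.equivOfCardEq hcard).symm
  refine ⟨a ∘ e, ha.comp e.injective, ?_⟩
  rw [← isUnit_iff_isUnit_det]
  exact linearIndependent_rows_iff_isUnit.mp (hli.comp e e.injective)

variable {K : Type*} [Field K] [LinearOrder K] [IsStrictOrderedRing K] [Fintype n]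
  [DecidableEq n]

def IsMaxVol (V : Matrix m n K) (p : n → m) : Prop :=
  ∀ q : n → m, q.Injective → |(V.submatrix q id).det| ≤ |(V.submatrix p id).det|

namespace IsMaxVol

variable {V : Matrix m n K} {p : n → m}

theorem abs_det_submatrix_le (hmax : IsMaxVol V p) (q : n → m) :
    |(V.submatrix q id).det| ≤ |(V.submatrix p id).det| := by
  by_cases hq : q.Injective
  · exact hmax q hq
  · rw [det_submatrix_eq_zero_of_not_injective V hq, abs_zero]
    exact abs_nonneg _

theorem isUnit_det [Fintype m] (hmax : IsMaxVol V p) (hrank : V.rank = Fintype.card n) :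
    IsUnit (V.submatrix p id).det := by
  obtain ⟨q, hq, hunit⟩ := exists_injective_isUnit_det_submatrix V hrank
  refine isUnit_iff_ne_zero.mpr (abs_pos.mp ?_)
  exact (abs_pos.mpr hunit.ne_zero).trans_le (hmax q hq)

theorem abs_mul_inv_apply_le_one (hmax : IsMaxVol V p) (hunit : IsUnit (V.submatrix p id).det)
    (i : m) (j : n) : |(V * (V.submatrix p id)⁻¹) i j| ≤ 1 := by
  have hcramer := det_mul_vecMul_inv_apply (V.submatrix p id) hunit (V i) j
  have hbound := hmax.abs_det_submatrix_le (Function.update p j i)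
  rw [submatrix_update_eq_updateRow, Function.comp_id, ← hcramer, abs_mul] at hbound
  exact (mul_le_iff_le_one_right (abs_pos.mpr hunit.ne_zero)).mp hbound

end IsMaxVol

end Matrix

theorem stmt_5_general (K R : ℕ) (V : Matrix (Fin K) (Fin R) ℝ)
    (hrank : V.rank = R)
    (p : Fin R → Fin K)
    (hmax : ∀ q : Fin R → Fin K, Function.Injective q →
      |(V.submatrix q id).det| ≤ |(V.submatrix p id).det|) :
    IsUnit (V.submatrix p id).det ∧
    ∀ i j, |(V * (V.submatrix p id)⁻¹) i j| ≤ 1 := by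
  have hunit : IsUnit (V.submatrix p id).det :=
    IsMaxVol.isUnit_det hmax (by rw [hrank, Fintype.card_fin])
  exact ⟨hunit, IsMaxVol.abs_mul_inv_apply_le_one hmax hunit⟩

theorem stmt_5 (K R : ℕ) (V : Matrix (Fin K) (Fin R) ℝ)
    (hrank : V.rank = R)
    (p : Fin R → Fin K) (hp : Function.Injective p)
    (hmax : ∀ q : Fin R → Fin K, Function.Injective q →
      |(V.submatrix q id).det| ≤ |(V.submatrix p id).det|) :
    IsUnit (V.submatrix p id).det ∧
    ∀ i j, |(V * (V.submatrix p id)⁻¹) i j| ≤ 1 :=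
  stmt_5_general K R V hrank p hmax
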